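/- Let x' be a 0–1 sequence with associated real x. If for all m ∈ ℕ the predicate [x, 4m+1] holds and the predicate [x, 4m+3] fails, then x' is alternating: x'(4m+1) = 0 and x'(4m+3) = 1 for all m ∈ ℕ. -/

import Mathlib

/-- `x'` is a 0–1 sequence: defined on positive integers with values in {0,1}. -/
def IsZeroOne (x' : ℕ → ℕ) : Prop := ∀ i, 1 ≤ i → x' i = 0 ∨ x' i = 1

/-- The real number associated to a 0–1 sequence: `Σ_{i=1}^∞ x'(i)·2^{-i}`. -/
noncomputable def assocReal (x' : ℕ → ℕ) : ℝ := ∑' i : ℕ, (x' (i + 1) : ℝ) / 2 ^ (i + 1)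

/-- A real `y` is `p`-rational if `y·2^p` is a natural number. -/
def IsPRational (p : ℕ) (y : ℝ) : Prop := ∃ q : ℕ, y * 2 ^ p = (q : ℝ)

/-- The predicate `[x, p]` (for `p ≥ 1`): there is a `(p-1)`-rational `y` with
`0 < x - y < 1/2^p`. -/
def BracketPred (x : ℝ) (p : ℕ) : Prop :=
  ∃ y : ℝ, IsPRational (p - 1) y ∧ 0 < x - y ∧ x - y < 1 / 2 ^ p

/-- A 0–1 sequence is alternating if `x'(4m+1) = 0` and `x'(4m+3) = 1` for all `m`. -/
def Alternating (x' : ℕ → ℕ) : Prop := ∀ m : ℕ, x' (4 * m + 1) = 0 ∧ x' (4 * m + 3) = 1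


/-!
Write `2^p x = N + t_p` with `N ∈ ℕ` and `t_p ∈ [0, 1]` the value of the digits of `x'` after
position `p`. Then `[x, p+1]` says exactly `0 < t_p < 1/2`, which forces `x'(p+1) = 0`.
Since `t_p = (x'(p+1) + t_{p+1}) / 2`, the digit `x'(4m+3) = 0` together with `[x, 4m+5]` would
give `0 < t_{4m+2} < 3/8`, i.e. `[x, 4m+3]`.
-/

lemma bracketPred_succ_iff_exists_nat {x : ℝ} {p : ℕ} :
    BracketPred x (p + 1) ↔ ∃ q : ℕ, (q : ℝ) < 2 ^ p * x ∧ 2 ^ p * x < q + 1 / 2 := by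
  have h2p : (0 : ℝ) < 2 ^ p := by positivity
  have hscale : ∀ y : ℝ, x - y < 1 / 2 ^ (p + 1) ↔ 2 ^ p * (x - y) < 1 / 2 := fun y => by
    rw [pow_succ, mul_comm, ← div_div, lt_div_iff₀ h2p, mul_comm]
  simp only [BracketPred, IsPRational, Nat.add_sub_cancel, hscale]
  constructor
  · rintro ⟨y, ⟨q, hq⟩, hpos, hlt⟩
    refine ⟨q, ?_, ?_⟩ <;> nlinarith
  · rintro ⟨q, hq1, hq2⟩
    refine ⟨q / 2 ^ p, ⟨q, div_mul_cancel₀ _ h2p.ne'⟩, ?_, ?_⟩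
    · rw [sub_pos, div_lt_iff₀ h2p]; linarith
    · rw [mul_sub, mul_div_cancel₀ _ h2p.ne']; linarith

lemma bracketPred_succ_iff_of_eq {x a : ℝ} {p N : ℕ} (ha0 : 0 ≤ a) (ha1 : a ≤ 1)
    (hx : 2 ^ p * x = N + a) : BracketPred x (p + 1) ↔ 0 < a ∧ a < 1 / 2 := by
  rw [bracketPred_succ_iff_exists_nat, hx]
  constructor
  · rintro ⟨q, hq1, hq2⟩
    have hqN : q = N := by
      have hle : q < N + 1 := by exact_mod_cast (by linarith : (q : ℝ) < N + 1)
      have hge : N < q + 1 := by exact_mod_cast (by linarith : (N : ℝ) < q + 1)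
      omega
    subst hqN
    constructor <;> linarith
  · rintro ⟨h0, h1⟩
    exact ⟨N, by linarith, by linarith⟩

lemma assocReal_nonneg (x' : ℕ → ℕ) : 0 ≤ assocReal x' :=
  tsum_nonneg fun i => by positivity

/-- `2^p · Σ_{i>p} x'(i)·2^{-i}`. -/
noncomputable def tailReal (x' : ℕ → ℕ) (p : ℕ) : ℝ := assocReal (fun i => x' (i + p))

lemma tailReal_zero (x' : ℕ → ℕ) : tailReal x' 0 = assocReal x' := rfl

lemma tailReal_nonneg (x' : ℕ → ℕ) (p : ℕ) : 0 ≤ tailReal x' p := assocReal_nonneg _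

namespace IsZeroOne

variable {x' : ℕ → ℕ}

lemma le_one (hx' : IsZeroOne x') {i : ℕ} (hi : 1 ≤ i) : x' i ≤ 1 := by
  rcases hx' i hi with h | h <;> omega

lemma shift (hx' : IsZeroOne x') (p : ℕ) : IsZeroOne (fun i => x' (i + p)) :=
  fun i hi => hx' (i + p) (by omega)

lemma summable (hx' : IsZeroOne x') :
    Summable (fun i => (x' (i + 1) : ℝ) / 2 ^ (i + 1)) := by
  refine Summable.of_nonneg_of_le (fun i => by positivity) (fun i => ?_)
    ((summable_geometric_two).comp_injective (add_left_injective 1))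
  rw [Function.comp_apply, one_div_pow]
  gcongr
  exact_mod_cast hx'.le_one (Nat.le_add_left 1 i)

lemma assocReal_le_one (hx' : IsZeroOne x') : assocReal x' ≤ 1 := by
  calc assocReal x' ≤ ∑' i : ℕ, (1 / 2 : ℝ) ^ (i + 1) := by
        refine hx'.summable.tsum_le_tsum (fun i => ?_)
          ((summable_geometric_two).comp_injective (add_left_injective 1))
        rw [one_div_pow]
        gcongr
        exact_mod_cast hx'.le_one (Nat.le_add_left 1 i)
    _ = 1 := by simp only [pow_succ, tsum_mul_right, tsum_geometric_two]; norm_num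

lemma assocReal_eq (hx' : IsZeroOne x') :
    assocReal x' = (x' 1 + assocReal (fun i => x' (i + 1))) / 2 := by
  rw [assocReal, hx'.summable.tsum_eq_zero_add, assocReal, add_div, ← tsum_div_const]
  congr 1
  · norm_num
  · refine tsum_congr fun i => ?_
    rw [pow_succ]
    field_simp

lemma tailReal_eq (hx' : IsZeroOne x') (p : ℕ) :
    tailReal x' p = (x' (p + 1) + tailReal x' (p + 1)) / 2 := by
  rw [tailReal, (hx'.shift p).assocReal_eq, tailReal, Nat.add_comm 1 p]
  simp only [Nat.add_assoc, Nat.add_comm 1 p]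

lemma exists_two_pow_mul_assocReal (hx' : IsZeroOne x') (p : ℕ) :
    ∃ N : ℕ, 2 ^ p * assocReal x' = N + tailReal x' p := by
  induction p with
  | zero => exact ⟨0, by simp [tailReal_zero]⟩
  | succ p ih =>
    obtain ⟨N, hN⟩ := ih
    refine ⟨2 * N + x' (p + 1), ?_⟩
    rw [pow_succ, mul_comm _ (2 : ℝ), mul_assoc, hN, hx'.tailReal_eq p]
    push_cast
    ring

lemma bracketPred_assocReal_succ_iff (hx' : IsZeroOne x') (p : ℕ) :
    BracketPred (assocReal x') (p + 1) ↔ 0 < tailReal x' p ∧ tailReal x' p < 1 / 2 := by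
  obtain ⟨N, hN⟩ := hx'.exists_two_pow_mul_assocReal p
  exact bracketPred_succ_iff_of_eq (assocReal_nonneg _) (hx'.shift p).assocReal_le_one hN

lemma eq_zero_of_tailReal_lt_half (hx' : IsZeroOne x') {p : ℕ} (h : tailReal x' p < 1 / 2) :
    x' (p + 1) = 0 := by
  have hdigit : (x' (p + 1) : ℝ) < 1 := by
    linarith [hx'.tailReal_eq p, tailReal_nonneg x' (p + 1)]
  exact_mod_cast Nat.lt_one_iff.mp (by exact_mod_cast hdigit)

end IsZeroOne

/-- If for all `m` the predicate `[x, 4m+1]` holds and `[x, 4m+3]` fails, then `x'`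
is alternating. -/
theorem stmt12 (x' : ℕ → ℕ) (hx' : IsZeroOne x') (x : ℝ) (hx : x = assocReal x')
    (h : ∀ m : ℕ, BracketPred x (4 * m + 1) ∧ ¬ BracketPred x (4 * m + 3)) :
    Alternating x' := by
  subst hx
  intro m
  have hbr := hx'.bracketPred_assocReal_succ_iff
  refine ⟨hx'.eq_zero_of_tailReal_lt_half ((hbr (4 * m)).1 (h m).1).2, ?_⟩
  obtain ⟨hpos, hlt⟩ := (hbr (4 * m + 4)).1 (h (m + 1)).1
  refine (hx' (4 * m + 3) (by omega)).resolve_left fun hzero =>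
    (h m).2 ((hbr (4 * m + 2)).2 ?_)
  have h4 : (x' (4 * m + 4) : ℝ) ≤ 1 := by exact_mod_cast hx'.le_one (by omega)
  have ht2 := hx'.tailReal_eq (4 * m + 2)
  have ht3 := hx'.tailReal_eq (4 * m + 3)
  rw [hzero, Nat.cast_zero] at ht2
  constructor <;> linarith [tailReal_nonneg x' (4 * m + 4)]
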